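/- Every multigraph G is an induced sub-multigraph of a ρ-regular multigraph R with ω(R) ≤ ρ, where ρ = max(Δ(G), ω(G)). -/

import Mathlib

open Finset

/-- A multigraph: a finite vertex type, a finite edge type, an endpoints map
into unordered pairs of vertices, and no loops. -/
structure Multigraph where
  V : Type
  E : Type
  fintypeV : Fintype V
  decEqV : DecidableEq V
  fintypeE : Fintype E
  decEqE : DecidableEq E
  ends : E → Sym2 V
  noLoops : ∀ e, ¬ (ends e).IsDiag

attribute [instance] Multigraph.fintypeV Multigraph.decEqV Multigraph.fintypeE Multigraph.decEqE

namespace Multigraph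

open scoped Classical

variable (G : Multigraph)

/-- The degree of a vertex: the number of edges incident to it. -/
noncomputable def degree (x : G.V) : ℕ :=
  (Finset.univ.filter fun e => x ∈ G.ends e).card

/-- The maximum vertex degree Δ(G). -/
noncomputable def maxDegree : ℕ :=
  Finset.univ.sup fun x : G.V => G.degree x

/-- E(S): the edges with both endpoints in S. -/
noncomputable def edgesIn (S : Finset G.V) : Finset G.E :=
  Finset.univ.filter fun e => ∀ x ∈ G.ends e, x ∈ S

/-- Ceiling division of natural numbers: ⌈a / b⌉. -/
def ceilDiv (a b : ℕ) : ℕ := (a + b - 1) / b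

/-- The density ω(G) = max over vertex subsets S with |S| ≥ 2 of ⌈|E(S)| / ⌊|S|/2⌋⌉. -/
noncomputable def density : ℕ :=
  (Finset.univ.powerset.filter fun S : Finset G.V => 2 ≤ S.card).sup
    fun S => ceilDiv (G.edgesIn S).card (S.card / 2)

/-- A proper edge-coloring with colors `Fin c`: adjacent (distinct, sharing an endpoint)
edges receive distinct colors. -/
def IsProperEdgeColoring (c : ℕ) (col : G.E → Fin c) : Prop :=
  ∀ e f : G.E, e ≠ f → (∃ x : G.V, x ∈ G.ends e ∧ x ∈ G.ends f) → col e ≠ col f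

/-- The chromatic index χ'(G): the least number of colors in a proper edge-coloring. -/
noncomputable def chromaticIndex : ℕ :=
  sInf {c : ℕ | ∃ col : G.E → Fin c, G.IsProperEdgeColoring c col}

/-- μ(x): the set of colors used on the edges incident to x. -/
noncomputable def mu {c : ℕ} (col : G.E → Fin c) (x : G.V) : Finset (Fin c) :=
  (Finset.univ.filter fun e => x ∈ G.ends e).image col

/-- A degree-coloring with c colors: the degree condition and the cover condition. -/
def IsDegreeColoring (c : ℕ) (μ : G.V → Finset (Fin c)) : Prop :=
  (∀ x : G.V, (μ x).card = G.degree x) ∧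
  ∀ S : Finset G.V,
    (G.edgesIn S).card ≤ ∑ i : Fin c, (S.filter fun x => i ∈ μ x).card / 2

/-- The degree-coloring index τ(G): the least c admitting a degree-coloring. -/
noncomputable def tau : ℕ :=
  sInf {c : ℕ | ∃ μ : G.V → Finset (Fin c), G.IsDegreeColoring c μ}

/-- A matching: a set of pairwise non-adjacent edges. -/
def IsMatching (M : Finset G.E) : Prop :=
  ∀ e ∈ M, ∀ f ∈ M, e ≠ f → ∀ x : G.V, ¬ (x ∈ G.ends e ∧ x ∈ G.ends f)

/-- π(F): the maximum size of a matching consisting of edges from F. -/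
noncomputable def matchingNumber (F : Finset G.E) : ℕ :=
  (F.powerset.filter fun M => G.IsMatching M).sup Finset.card

/-- ω*(G) = max over nonempty F ⊆ E of ⌈|F| / π(F)⌉. -/
noncomputable def omegaStar : ℕ :=
  (Finset.univ.powerset.filter fun F : Finset G.E => F.Nonempty).sup
    fun F => ceilDiv F.card (G.matchingNumber F)

/-- H is a sub-multigraph of G. -/
def IsSub (H G : Multigraph) : Prop :=
  ∃ (f : H.V ↪ G.V) (g : H.E ↪ G.E),
    ∀ e : H.E, G.ends (g e) = (H.ends e).map f

/-- H is an induced sub-multigraph of G: additionally every edge of G with both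
endpoints in the image of the vertex embedding comes from H. -/
def IsInducedSub (H G : Multigraph) : Prop :=
  ∃ (f : H.V ↪ G.V) (g : H.E ↪ G.E),
    (∀ e : H.E, G.ends (g e) = (H.ends e).map f) ∧
    ∀ e' : G.E, (∀ x ∈ G.ends e', x ∈ Set.range f) → e' ∈ Set.range g

/-- Regularization: if G is regular with ω(G) ≤ Δ(G), R(G) = G; otherwise take two
disjoint copies of G and join each vertex x to its copy by
max(Δ(G), ω(G)) − deg_G(x) parallel edges. -/
noncomputable def regularize (G : Multigraph) : Multigraph :=
  if (∀ x : G.V, G.degree x = G.maxDegree) ∧ G.density ≤ G.maxDegree then G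
  else
    { V := G.V ⊕ G.V
      E := G.E ⊕ G.E ⊕ (Σ x : G.V, Fin (max G.maxDegree G.density - G.degree x))
      fintypeV := inferInstance
      decEqV := inferInstance
      fintypeE := inferInstance
      decEqE := inferInstance
      ends := fun e =>
        match e with
        | Sum.inl e => (G.ends e).map Sum.inl
        | Sum.inr (Sum.inl e) => (G.ends e).map Sum.inr
        | Sum.inr (Sum.inr p) => s(Sum.inl p.1, Sum.inr p.1)
      noLoops := by
        rintro (e | e | p)
        · rw [Sym2.isDiag_map Sum.inl_injective]; exact G.noLoops e
        · rw [Sym2.isDiag_map Sum.inr_injective]; exact G.noLoops e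
        · rw [Sym2.mk_isDiag_iff]; simp }

end Multigraph

/-!
Take two disjoint copies of `G` and join the two copies of each vertex `x` by `ρ - deg x`
parallel edges: the result is `ρ`-regular and contains the first copy as an induced
sub-multigraph. A vertex set `S` of it meets the copies in `A` and `B`; put `D = A ∩ B`.
Counting edge–vertex incidences at `D`, the edges of `G` inside `A` or inside `B` that are not
inside `A \ B` or `B \ A` number at most `∑_{x ∈ D} deg x`, and together with the
`ρ - deg x` joining edges at each `x ∈ D` this gives at most `ρ |D|`. The edges inside
`A \ B` and `B \ A` number at most `ρ ⌊|A \ B|/2⌋ + ρ ⌊|B \ A|/2⌋` by `ω(G) ≤ ρ`, and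
`|S| = |A \ B| + |B \ A| + 2 |D|`, so `S` spans at most `ρ ⌊|S|/2⌋` edges.
-/

namespace Multigraph

lemma ceilDiv_le_iff {a b c : ℕ} (hb : 0 < b) : ceilDiv a b ≤ c ↔ a ≤ c * b := by
  rw [ceilDiv, Nat.div_le_iff_le_mul_add_pred hb, mul_comm c b]
  omega

variable (G : Multigraph)

lemma degree_eq_sum (x : G.V) : G.degree x = ∑ e, if x ∈ G.ends e then 1 else 0 := by
  rw [degree, card_filter]

lemma card_edgesIn_eq_sum (S : Finset G.V) :
    #(G.edgesIn S) = ∑ e, if ∀ x ∈ G.ends e, x ∈ S then 1 else 0 := by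
  rw [edgesIn, card_filter]

lemma degree_le_maxDegree (x : G.V) : G.degree x ≤ G.maxDegree :=
  le_sup (mem_univ x)

lemma edgesIn_eq_empty_of_card_le_one {S : Finset G.V} (hS : #S ≤ 1) : G.edgesIn S = ∅ := by
  refine eq_empty_of_forall_notMem fun e he => ?_
  induction h : G.ends e using Sym2.ind with
  | _ u v =>
    have huv : u ≠ v := by simpa [h] using G.noLoops e
    have hsub : ∀ x ∈ s(u, v), x ∈ S := by simpa [edgesIn, h] using he
    rw [Sym2.ball] at hsub
    have := one_lt_card.mpr ⟨u, hsub.1, v, hsub.2, huv⟩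
    omega

lemma card_edgesIn_le_density_mul (S : Finset G.V) : #(G.edgesIn S) ≤ G.density * (#S / 2) := by
  rcases le_or_gt #S 1 with hS | hS
  · simp [G.edgesIn_eq_empty_of_card_le_one hS]
  · rw [← ceilDiv_le_iff (by omega)]
    exact le_sup (f := fun S : Finset G.V => ceilDiv #(G.edgesIn S) (#S / 2)) (by simp; omega)

lemma card_edgesIn_add_card_edgesIn_le (A B : Finset G.V) :
    #(G.edgesIn A) + #(G.edgesIn B) ≤
      #(G.edgesIn (A \ B)) + #(G.edgesIn (B \ A)) + ∑ x ∈ A ∩ B, G.degree x := by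
  simp only [card_edgesIn_eq_sum, degree_eq_sum]
  rw [sum_comm, ← sum_add_distrib, ← sum_add_distrib, ← sum_add_distrib]
  refine sum_le_sum fun e _ => ?_
  -- An edge inside both `A` and `B` has both ends in `A ∩ B`; an edge inside `A` but not
  -- inside `A \ B` has at least one.
  induction h : G.ends e using Sym2.ind with
  | _ u v =>
    have huv : u ≠ v := by simpa [h] using G.noLoops e
    have hpair : ∀ x, (if x = u ∨ x = v then 1 else 0) =
        (if u = x then 1 else 0) + (if v = x then 1 else 0) := by
      intro x; by_cases hu : x = u <;> by_cases hv : x = v <;> simp_all [eq_comm]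
    simp only [Sym2.mem_iff, forall_eq_or_imp, forall_eq, hpair, sum_add_distrib, sum_ite_eq,
      mem_sdiff, mem_inter]
    by_cases uA : u ∈ A <;> by_cases uB : u ∈ B <;> by_cases vA : v ∈ A <;> by_cases vB : v ∈ B <;>
      simp [uA, uB, vA, vB]

/-- The non-regular branch of `regularize`, with `max G.maxDegree G.density` replaced by any `r`. -/
noncomputable abbrev double (r : ℕ) : Multigraph where
  V := G.V ⊕ G.V
  E := G.E ⊕ G.E ⊕ (Σ x : G.V, Fin (r - G.degree x))
  fintypeV := inferInstance
  decEqV := inferInstance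
  fintypeE := inferInstance
  decEqE := inferInstance
  ends
    | .inl e => (G.ends e).map .inl
    | .inr (.inl e) => (G.ends e).map .inr
    | .inr (.inr p) => s(.inl p.1, .inr p.1)
  noLoops
    | .inl e => by rw [Sym2.isDiag_map Sum.inl_injective]; exact G.noLoops e
    | .inr (.inl e) => by rw [Sym2.isDiag_map Sum.inr_injective]; exact G.noLoops e
    | .inr (.inr p) => by simp

variable {G} {r : ℕ}

lemma degree_double (hr : G.maxDegree ≤ r) (y : G.V ⊕ G.V) : (G.double r).degree y = r := by
  have hx (x : G.V) : G.degree x + (r - G.degree x) = r := by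
    have := (G.degree_le_maxDegree x).trans hr
    omega
  rw [degree_eq_sum, Fintype.sum_sum_type, Fintype.sum_sum_type, Fintype.sum_sigma]
  rcases y with x | x
  · simpa [double, Sym2.mem_map, degree_eq_sum] using hx x
  · simpa [double, Sym2.mem_map, degree_eq_sum] using hx x

lemma card_edgesIn_double (S : Finset (G.V ⊕ G.V)) :
    #((G.double r).edgesIn S) = #(G.edgesIn S.toLeft) + #(G.edgesIn S.toRight) +
      ∑ x ∈ S.toLeft ∩ S.toRight, (r - G.degree x) := by
  rw [card_edgesIn_eq_sum, Fintype.sum_sum_type, Fintype.sum_sum_type, Fintype.sum_sigma,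
    ← univ_inter (S.toLeft ∩ S.toRight), ← sum_ite_mem]
  simp [double, Sym2.mem_map, card_edgesIn_eq_sum, add_assoc]

lemma density_double_le (hΔ : G.maxDegree ≤ r) (hω : G.density ≤ r) :
    (G.double r).density ≤ r := by
  refine Finset.sup_le fun S hS => ?_
  have hS2 : 2 ≤ #S := (mem_filter.mp hS).2
  rw [ceilDiv_le_iff (by omega)]
  set A := S.toLeft
  set B := S.toRight
  have hsize : #(A \ B) + #(B \ A) + 2 * #(A ∩ B) = #S := by
    rw [← card_toLeft_add_card_toRight, ← card_sdiff_add_card_inter A B,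
      ← card_sdiff_add_card_inter B A, inter_comm B A]
    ring
  have hjoin : ∑ x ∈ A ∩ B, G.degree x + ∑ x ∈ A ∩ B, (r - G.degree x) = r * #(A ∩ B) := by
    rw [← sum_add_distrib, sum_congr rfl fun x _ => Nat.add_sub_cancel' <|
      (G.degree_le_maxDegree x).trans hΔ, sum_const, smul_eq_mul, mul_comm]
  have hA : #(G.edgesIn (A \ B)) ≤ r * (#(A \ B) / 2) :=
    (G.card_edgesIn_le_density_mul _).trans (by gcongr)
  have hB : #(G.edgesIn (B \ A)) ≤ r * (#(B \ A) / 2) :=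
    (G.card_edgesIn_le_density_mul _).trans (by gcongr)
  calc #((G.double r).edgesIn S)
      = #(G.edgesIn A) + #(G.edgesIn B) + ∑ x ∈ A ∩ B, (r - G.degree x) := card_edgesIn_double S
    _ ≤ #(G.edgesIn (A \ B)) + #(G.edgesIn (B \ A)) + ∑ x ∈ A ∩ B, G.degree x +
          ∑ x ∈ A ∩ B, (r - G.degree x) := by
        gcongr ?_ + _
        exact G.card_edgesIn_add_card_edgesIn_le A B
    _ ≤ r * (#(A \ B) / 2) + r * (#(B \ A) / 2) + r * #(A ∩ B) := by
        rw [add_assoc _ (∑ x ∈ A ∩ B, G.degree x), hjoin]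
        gcongr
    _ ≤ r * (#S / 2) := by
        rw [← mul_add, ← mul_add]
        exact Nat.mul_le_mul_left _ (by omega)

lemma isInducedSub_double : G.IsInducedSub (G.double r) := by
  refine ⟨⟨Sum.inl, Sum.inl_injective⟩, ⟨Sum.inl, Sum.inl_injective⟩, fun e => rfl, ?_⟩
  rintro (e | e | p) h
  · exact ⟨e, rfl⟩
  · obtain ⟨w, hw⟩ := h (.inr (G.ends e).out.1) (Sym2.mem_map.mpr ⟨_, Sym2.out_fst_mem _, rfl⟩)
    simp at hw
  · obtain ⟨w, hw⟩ := h (.inr p.1) (by simp)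
    simp at hw

end Multigraph

/-- every multigraph G is an induced sub-multigraph of a ρ-regular
multigraph R with ω(R) ≤ ρ, where ρ = max(Δ(G), ω(G)). -/
theorem stmt_11 (G : Multigraph) :
    ∃ R : Multigraph, Multigraph.IsInducedSub G R ∧
      (∀ x : R.V, R.degree x = max G.maxDegree G.density) ∧
      R.density ≤ max G.maxDegree G.density :=
  ⟨G.double _, G.isInducedSub_double, Multigraph.degree_double (le_max_left _ _),
    Multigraph.density_double_le (le_max_left _ _) (le_max_right _ _)⟩
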